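/- arXiv:2404.18205 — 2 statements merged into one kernel-verified Lean document; each statement's English description precedes it below -/
import Mathlib

section
/- Let M be a preference model with ⪰ transitive and smooth, v ∈ W, and A a finite set of formulas. If some u ≻ v satisfies a formula α ∈ A, then some element of MaxSeq(M, {u : u ≻ v}, A) satisfies α. -/
/-- Formulas of Åqvist's dyadic deontic language. -/
inductive PForm (V : Type) : Type
  | var : V → PForm V
  | neg : PForm V → PForm V
  | conj : PForm V → PForm V → PForm V
  | box : PForm V → PForm V
  | ob : PForm V → PForm V → PForm V   -- `ob γ α` is ◯(γ/α)

/-- Strict version of a binary relation: `a ≻ b` iff `a ⪰ b` and `¬ b ⪰ a`. -/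
def strictRel {W : Type} (r : W → W → Prop) (a b : W) : Prop := r a b ∧ ¬ r b a

/-- ≻-maximal elements of a set `U`. -/
def maxSet {W : Type} (r : W → W → Prop) (U : Set W) : Set W :=
  {v | v ∈ U ∧ ¬ ∃ u ∈ U, strictRel r u v}

/-- A preference model. -/
structure PrefModel (V : Type) : Type 1 where
  W : Type
  rel : W → W → Prop
  val : V → Set W

/-- Truth set of a formula in a preference model. -/
def truthSet {V : Type} (M : PrefModel V) : PForm V → Set M.W
  | .var x => M.val x
  | .neg ψ => (truthSet M ψ)ᶜ
  | .conj ψ₁ ψ₂ => truthSet M ψ₁ ∩ truthSet M ψ₂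
  | .box β => {_w | truthSet M β = Set.univ}
  | .ob γ α => {_w | maxSet M.rel (truthSet M α) ⊆ truthSet M γ}

/-- A model validates a formula when it is true at all worlds. -/
def valid {V : Type} (M : PrefModel V) (φ : PForm V) : Prop :=
  truthSet M φ = Set.univ

/-- Limitedness of a preference model. -/
def Limited {V : Type} (M : PrefModel V) : Prop :=
  ∀ α : PForm V, (truthSet M α).Nonempty → (maxSet M.rel (truthSet M α)).Nonempty

/-- Smoothness of a preference model. -/
def SmoothModel {V : Type} (M : PrefModel V) : Prop :=
  ∀ (α : PForm V) (w : M.W), w ∈ truthSet M α →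
    ∃ u ∈ maxSet M.rel (truthSet M α), u = w ∨ strictRel M.rel u w

/-- Subformulas of a formula (including the formula itself). -/
def Subf {V : Type} : PForm V → Set (PForm V)
  | .var x => {.var x}
  | .neg ψ => insert (.neg ψ) (Subf ψ)
  | .conj ψ₁ ψ₂ => insert (.conj ψ₁ ψ₂) (Subf ψ₁ ∪ Subf ψ₂)
  | .box β => insert (.box β) (Subf β)
  | .ob γ α => insert (.ob γ α) (Subf γ ∪ Subf α)

open scoped Classical in
/-- The iterative selection of maximal worlds for disjunctions of remaining conditions. -/
noncomputable def maxSeq {V : Type} (M : PrefModel V) (rep : Set M.W → M.W)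
    (hrep : ∀ S : Set M.W, S.Nonempty → rep S ∈ S)
    (U : Set M.W) (A : Finset (PForm V)) : List M.W :=
  if h : (U ∩ maxSet M.rel (⋃ α ∈ A, truthSet M α)).Nonempty then
    rep (U ∩ maxSet M.rel (⋃ α ∈ A, truthSet M α)) ::
      maxSeq M rep hrep U
        (A.filter fun α =>
          rep (U ∩ maxSet M.rel (⋃ α ∈ A, truthSet M α)) ∉ truthSet M α)
  else []
termination_by A.card
decreasing_by
  have hz := hrep _ h
  have hz2 : rep (U ∩ maxSet M.rel (⋃ α ∈ A, truthSet M α)) ∈ ⋃ α ∈ A, truthSet M α :=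
    hz.2.1
  simp only [Set.mem_iUnion] at hz2
  obtain ⟨α₀, hα₀A, hα₀⟩ := hz2
  exact Finset.card_lt_card
    (Finset.filter_ssubset.mpr ⟨α₀, hα₀A, by simp [hα₀]⟩)

/-
`maxSeq` keeps selecting a ≻-maximal world of the disjunction of the formulas left in `A`, as
long as one lies in `U`, and then drops the formulas it satisfies. Suppose `α` stays in `A`
and some `w ∈ U` satisfies it. Then `w` satisfies the disjunction, so by smoothness some
maximal world `u` of it equals `w` or lies strictly above `w`. If `U` is closed upwards under
≻, as `{u | u ≻ v}` is by transitivity, `u ∈ U`, so the selection cannot stop yet. Since `A`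
shrinks at every step, `α` is eventually satisfied by a selected world.
-/

lemma strictRel_trans {W : Type} {r : W → W → Prop} (h : Transitive r) {a b c : W}
    (hab : strictRel r a b) (hbc : strictRel r b c) : strictRel r a c :=
  ⟨h hab.1 hbc.1, fun hca => hbc.2 (h hca hab.1)⟩

lemma exists_truthSet_eq_biUnion {V : Type} (M : PrefModel V) {A : Finset (PForm V)}
    (hA : A.Nonempty) : ∃ φ : PForm V, truthSet M φ = ⋃ α ∈ A, truthSet M α := by
  induction hA using Finset.Nonempty.cons_induction with
  | singleton a => exact ⟨a, by simp⟩
  | cons a s ha hs ih =>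
    obtain ⟨φ, hφ⟩ := ih
    refine ⟨.neg (.conj (.neg a) (.neg φ)), ?_⟩
    simp only [truthSet, Set.compl_inter, compl_compl, hφ]
    ext x
    simp

lemma SmoothModel.exists_mem_maxSet_biUnion {V : Type} {M : PrefModel V}
    (hsmooth : SmoothModel M) {A : Finset (PForm V)} {w : M.W}
    (hw : w ∈ ⋃ α ∈ A, truthSet M α) :
    ∃ u ∈ maxSet M.rel (⋃ α ∈ A, truthSet M α), u = w ∨ strictRel M.rel u w := by
  obtain ⟨α, hα, -⟩ := Set.mem_iUnion₂.1 hw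
  obtain ⟨φ, hφ⟩ := exists_truthSet_eq_biUnion M ⟨α, hα⟩
  rw [← hφ] at hw ⊢
  exact hsmooth φ w hw

section maxSeq

variable {V : Type} {M : PrefModel V} {rep : Set M.W → M.W}
  {hrep : ∀ S : Set M.W, S.Nonempty → rep S ∈ S} {U : Set M.W}

open scoped Classical in
lemma maxSeq_of_nonempty {A : Finset (PForm V)}
    (h : (U ∩ maxSet M.rel (⋃ α ∈ A, truthSet M α)).Nonempty) :
    maxSeq M rep hrep U A =
      rep (U ∩ maxSet M.rel (⋃ α ∈ A, truthSet M α)) ::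
        maxSeq M rep hrep U
          (A.filter fun α => rep (U ∩ maxSet M.rel (⋃ α ∈ A, truthSet M α)) ∉ truthSet M α) := by
  rw [maxSeq, dif_pos h]

theorem exists_mem_maxSeq_mem_truthSet (hsmooth : SmoothModel M)
    (hU : ∀ u w, w ∈ U → strictRel M.rel u w → u ∈ U) {A : Finset (PForm V)} {α : PForm V}
    (hα : α ∈ A) {w : M.W} (hwU : w ∈ U) (hwα : w ∈ truthSet M α) :
    ∃ z ∈ maxSeq M rep hrep U A, z ∈ truthSet M α := by
  classical
  induction A using Finset.strongInduction with
  | H A ih =>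
  obtain ⟨u, hu_max, hu⟩ := hsmooth.exists_mem_maxSet_biUnion (Set.mem_biUnion hα hwα)
  have hne : (U ∩ maxSet M.rel (⋃ β ∈ A, truthSet M β)).Nonempty := by
    refine ⟨u, ?_, hu_max⟩
    rcases hu with rfl | hu
    exacts [hwU, hU u w hwU hu]
  rw [maxSeq_of_nonempty hne]
  set z := rep (U ∩ maxSet M.rel (⋃ β ∈ A, truthSet M β))
  by_cases hzα : z ∈ truthSet M α
  · exact ⟨z, List.mem_cons_self, hzα⟩
  have hfilter : A.filter (fun β => z ∉ truthSet M β) ⊂ A := by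
    obtain ⟨β, hβ, hzβ⟩ := Set.mem_iUnion₂.1 (hrep _ hne).2.1
    exact Finset.filter_ssubset.2 ⟨β, hβ, not_not.2 hzβ⟩
  obtain ⟨z', hz', hz'α⟩ := ih _ hfilter (Finset.mem_filter.2 ⟨hα, hzα⟩)
  exact ⟨z', List.mem_cons_of_mem _ hz', hz'α⟩

end maxSeq

/-- In a transitive smooth model, if some `u ≻ v` satisfies `α ∈ A`, then some element of
the maximal chain selected from `{u : u ≻ v}` satisfies `α`. -/
theorem stmt16 {V : Type} (M : PrefModel V)
    (htrans : Transitive M.rel) (hsmooth : SmoothModel M)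
    (rep : Set M.W → M.W) (hrep : ∀ S : Set M.W, S.Nonempty → rep S ∈ S)
    (v : M.W) (A : Finset (PForm V)) (α : PForm V) (hα : α ∈ A)
    (h : ∃ u : M.W, strictRel M.rel u v ∧ u ∈ truthSet M α) :
    ∃ z ∈ maxSeq M rep hrep {u | strictRel M.rel u v} A, z ∈ truthSet M α := by
  obtain ⟨u, huv, huα⟩ := h
  exact exists_mem_maxSeq_mem_truthSet hsmooth
    (fun _ _ hw hu => strictRel_trans htrans hu hw) hα huv huα
end

section
/- If 𝔠 = ⟨L, ⪰_L, ℬ⟩ is a composite construction on M such that (a) every falsifying world v ∈ Fal(φ, M) occurs in a flat block ℬ(b_v) all of whose ⪰_L-predecessor blocks contain only worlds strictly preferred to v in M, and (b) every block is either (iv)-safe or (iv)-covered by some ⪰_L-preferred block, then the generated model gen(𝔠) does not validate φ. -/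
/-- A block on a model: a subset of worlds with a new preference relation. -/
structure Block (W : Type) where
  U : Set W
  rel : W → W → Prop

/-- The model generated by a composite construction `⟨L, relL, B⟩` on `M`. -/
def genModel {V : Type} (M : PrefModel V) {L : Type}
    (relL : L → L → Prop) (B : L → Block M.W) : PrefModel V where
  W := {p : L × M.W // p.2 ∈ (B p.1).U}
  rel := fun p q =>
    strictRel relL p.val.1 q.val.1 ∨
      (p.val.1 = q.val.1 ∧ (B p.val.1).rel p.val.2 q.val.2)
  val := fun x => {p | p.val.2 ∈ M.val x}

/-- The conditions of a formula: antecedents of its ◯-subformulas. -/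
def CondSet {V : Type} (φ : PForm V) : Set (PForm V) :=
  {α | ∃ γ : PForm V, PForm.ob γ α ∈ Subf φ}

/-- The falsifying worlds for `φ` in `M`, chosen by the representative function `rep`:
one world falsifying `φ`, one falsifying `β` for each non-validated subformula `□β`, and
one in `max_≻(⟦α⟧) \ ⟦γ⟧` for each non-validated subformula `◯(γ/α)`. -/
def Fal {V : Type} (M : PrefModel V) (rep : Set M.W → M.W) (φ : PForm V) : Set M.W :=
  {rep ((truthSet M φ)ᶜ)} ∪
  {v | ∃ β : PForm V, PForm.box β ∈ Subf φ ∧ ¬ valid M (PForm.box β) ∧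
      v = rep ((truthSet M β)ᶜ)} ∪
  {v | ∃ γ α : PForm V, PForm.ob γ α ∈ Subf φ ∧ ¬ valid M (PForm.ob γ α) ∧
      v = rep (maxSet M.rel (truthSet M α) \ truthSet M γ)}

/-- A block is flat when its internal strict preference is empty. -/
def FlatBlock {W : Type} (B : Block W) : Prop :=
  ∀ w₁ ∈ B.U, ∀ w₂ ∈ B.U, ¬ strictRel B.rel w₁ w₂

/-- A block is (iv)-safe when every condition of `φ` satisfiable strictly above one of
its worlds `w` is satisfied by a world strictly above `w` inside the block. -/
def IVSafe {V : Type} (M : PrefModel V) (φ : PForm V) (B : Block M.W) : Prop :=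
  ∀ w ∈ B.U, ∀ α ∈ CondSet φ,
    (∃ u : M.W, strictRel M.rel u w ∧ u ∈ truthSet M α) →
    ∃ w' ∈ B.U, strictRel B.rel w' w ∧ w' ∈ truthSet M α

/-- `B'` (iv)-covers `B` when every condition of `φ` satisfiable strictly above some
world of `B` is satisfiable in `B'`. -/
def IVCovers {V : Type} (M : PrefModel V) (φ : PForm V) (B' B : Block M.W) : Prop :=
  ∀ w ∈ B.U, ∀ α ∈ CondSet φ,
    (∃ u : M.W, strictRel M.rel u w ∧ u ∈ truthSet M α) →
    ∃ u' ∈ B'.U, u' ∈ truthSet M α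


lemma mem_Subf_self {V : Type} (psi : PForm V) : psi ∈ Subf psi := by
  cases psi <;> simp [Subf]

lemma Subf_trans {V : Type} {psi' psi phi : PForm V}
    (h1 : psi' ∈ Subf psi) (h2 : psi ∈ Subf phi) : psi' ∈ Subf phi := by
  induction phi with
  | var x =>
      simp only [Subf, Set.mem_singleton_iff] at h2
      subst h2; exact h1
  | neg chi ih =>
      simp only [Subf, Set.mem_insert_iff] at h2 ⊢
      rcases h2 with rfl | h2
      · simpa only [Subf, Set.mem_insert_iff] using h1
      · exact Or.inr (ih h2)
  | conj a b iha ihb =>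
      simp only [Subf, Set.mem_insert_iff, Set.mem_union] at h2 ⊢
      rcases h2 with rfl | h2 | h2
      · simpa only [Subf, Set.mem_insert_iff, Set.mem_union] using h1
      · exact Or.inr (Or.inl (iha h2))
      · exact Or.inr (Or.inr (ihb h2))
  | box a ih =>
      simp only [Subf, Set.mem_insert_iff] at h2 ⊢
      rcases h2 with rfl | h2
      · simpa only [Subf, Set.mem_insert_iff] using h1
      · exact Or.inr (ih h2)
  | ob a b iha ihb =>
      simp only [Subf, Set.mem_insert_iff, Set.mem_union] at h2 ⊢
      rcases h2 with rfl | h2 | h2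
      · simpa only [Subf, Set.mem_insert_iff, Set.mem_union] using h1
      · exact Or.inr (Or.inl (iha h2))
      · exact Or.inr (Or.inr (ihb h2))

lemma truth_lemma {V L : Type} (M : PrefModel V) (φ : PForm V)
    (rep : Set M.W → M.W) (hrep : ∀ S : Set M.W, S.Nonempty → rep S ∈ S)
    (relL : L → L → Prop) (B : L → Block M.W)
    (ha : ∀ v ∈ Fal M rep φ, ∃ bv : L, v ∈ (B bv).U ∧ FlatBlock (B bv) ∧
        ∀ b' : L, strictRel relL b' bv → ∀ u ∈ (B b').U, strictRel M.rel u v)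
    (hb : ∀ b : L, IVSafe M φ (B b) ∨
        ∃ b' : L, strictRel relL b' b ∧ IVCovers M φ (B b') (B b)) :
    ∀ ψ : PForm V, ψ ∈ Subf φ → ∀ p : (genModel M relL B).W,
      p ∈ truthSet (genModel M relL B) ψ ↔ p.val.2 ∈ truthSet M ψ := by
  intro ψ
  induction ψ with
  | var x => intro _ p; exact Iff.rfl
  | neg chi ih =>
      intro hψ p
      have hchi : chi ∈ Subf φ :=
        Subf_trans (show chi ∈ Subf (PForm.neg chi) from
          Set.mem_insert_of_mem _ (mem_Subf_self chi)) hψ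
      simp only [truthSet, Set.mem_compl_iff]
      exact not_congr (ih hchi p)
  | conj a b iha ihb =>
      intro hψ p
      have hall : a ∈ Subf (PForm.conj a b) ∧ b ∈ Subf (PForm.conj a b) :=
        ⟨Set.mem_insert_of_mem _ (Set.mem_union_left _ (mem_Subf_self a)),
         Set.mem_insert_of_mem _ (Set.mem_union_right _ (mem_Subf_self b))⟩
      have haφ : a ∈ Subf φ := Subf_trans hall.1 hψ
      have hbφ : b ∈ Subf φ := Subf_trans hall.2 hψ
      simp only [truthSet, Set.mem_inter_iff]
      exact and_congr (iha haφ p) (ihb hbφ p)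
  | box β ih =>
      intro hψ p
      have hβ : β ∈ Subf φ :=
        Subf_trans (show β ∈ Subf (PForm.box β) from
          Set.mem_insert_of_mem _ (mem_Subf_self β)) hψ
      simp only [truthSet, Set.mem_setOf_eq]
      constructor
      · intro hg
        by_contra hne
        have hv : ∃ v : M.W, v ∉ truthSet M β := by
          by_contra h; push_neg at h; exact hne (Set.eq_univ_iff_forall.mpr h)
        obtain ⟨v, hv⟩ := hv
        have hnval : ¬ valid M (PForm.box β) := by
          intro hval
          have hvm : v ∈ truthSet M (PForm.box β) := by rw [hval]; trivial
          simp only [truthSet, Set.mem_setOf_eq] at hvm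
          rw [hvm] at hv; exact hv (Set.mem_univ v)
        have hFal : rep ((truthSet M β)ᶜ) ∈ Fal M rep φ :=
          Or.inl (Or.inr ⟨β, hψ, hnval, rfl⟩)
        obtain ⟨bv, hmem, -, -⟩ := ha _ hFal
        have hrep' : rep ((truthSet M β)ᶜ) ∈ (truthSet M β)ᶜ := hrep _ ⟨v, hv⟩
        have hx := (ih hβ ⟨(bv, rep ((truthSet M β)ᶜ)), hmem⟩).mp
          (by rw [hg]; exact Set.mem_univ _)
        exact hrep' hx
      · intro hM
        ext q
        simp only [Set.mem_univ, iff_true]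
        exact (ih hβ q).mpr (by rw [hM]; exact Set.mem_univ _)
  | ob γ α ihγ ihα =>
      intro hψ p
      have hγ : γ ∈ Subf φ :=
        Subf_trans (show γ ∈ Subf (PForm.ob γ α) from
          Set.mem_insert_of_mem _ (Set.mem_union_left _ (mem_Subf_self γ))) hψ
      have hα : α ∈ Subf φ :=
        Subf_trans (show α ∈ Subf (PForm.ob γ α) from
          Set.mem_insert_of_mem _ (Set.mem_union_right _ (mem_Subf_self α))) hψ
      simp only [truthSet, Set.mem_setOf_eq]
      constructor
      · intro hg
        by_contra hnsub
        obtain ⟨v, hvmax, hvγ⟩ := Set.not_subset.mp hnsub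
        have hnval : ¬ valid M (PForm.ob γ α) := by
          intro hval
          have hvm : v ∈ truthSet M (PForm.ob γ α) := by rw [hval]; trivial
          simp only [truthSet, Set.mem_setOf_eq] at hvm
          exact hvγ (hvm hvmax)
        have hFal : rep (maxSet M.rel (truthSet M α) \ truthSet M γ) ∈ Fal M rep φ :=
          Or.inr ⟨γ, α, hψ, hnval, rfl⟩
        obtain ⟨bv, hmem, hflat, hpred⟩ := ha _ hFal
        have hv₁ : rep (maxSet M.rel (truthSet M α) \ truthSet M γ) ∈
            maxSet M.rel (truthSet M α) \ truthSet M γ := hrep _ ⟨v, hvmax, hvγ⟩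
        set v₁ := rep (maxSet M.rel (truthSet M α) \ truthSet M γ) with hv₁def
        have hp'max : (⟨(bv, v₁), hmem⟩ : (genModel M relL B).W) ∈
            maxSet (genModel M relL B).rel (truthSet (genModel M relL B) α) := by
          refine ⟨(ihα hα _).mpr hv₁.1.1, ?_⟩
          rintro ⟨q, hqα, hq1, hq2⟩
          have hqα' : q.val.2 ∈ truthSet M α := (ihα hα q).mp hqα
          rcases hq1 with hL | ⟨heq, hrel⟩
          · exact hv₁.1.2 ⟨q.val.2, hqα', hpred _ hL _ q.property⟩
          · have heq' : q.val.1 = bv := heq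
            have hnot : ¬ (B bv).rel v₁ q.val.2 := fun h => hq2 (Or.inr ⟨heq.symm, h⟩)
            have hu : q.val.2 ∈ (B bv).U := heq' ▸ q.property
            have hrel' : (B bv).rel q.val.2 v₁ := heq' ▸ hrel
            exact hflat q.val.2 hu v₁ hmem ⟨hrel', hnot⟩
        exact hv₁.2 ((ihγ hγ _).mp (hg hp'max))
      · intro hM q hqmax
        have hqα : q.val.2 ∈ truthSet M α := (ihα hα q).mp hqmax.1
        have hαC : α ∈ CondSet φ := ⟨γ, hψ⟩
        have hqM : q.val.2 ∈ maxSet M.rel (truthSet M α) := by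
          refine ⟨hqα, ?_⟩
          rintro ⟨u, huα, hu⟩
          rcases hb q.val.1 with hsafe | ⟨b', hb', hcov⟩
          · obtain ⟨w', hw'U, hw'rel, hw'α⟩ :=
              hsafe q.val.2 q.property α hαC ⟨u, hu, huα⟩
            refine hqmax.2 ⟨⟨(q.val.1, w'), hw'U⟩, (ihα hα _).mpr hw'α,
              Or.inr ⟨rfl, hw'rel.1⟩, ?_⟩
            rintro (hL | ⟨-, hr⟩)
            · exact hL.2 hL.1
            · exact hw'rel.2 hr
          · obtain ⟨u', hu'U, hu'α⟩ := hcov q.val.2 q.property α hαC ⟨u, hu, huα⟩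
            refine hqmax.2 ⟨⟨(b', u'), hu'U⟩, (ihα hα _).mpr hu'α, Or.inl hb', ?_⟩
            rintro (hL | ⟨heq, -⟩)
            · exact hb'.2 hL.1
            · rw [heq] at hb'; exact hb'.2 hb'.1
        exact (ihγ hγ q).mpr (hM hqM)

/-- If (a) every falsifying world lies in a flat block all of whose strict
`⪰_L`-predecessor blocks contain only worlds strictly preferred to it, and (b) every
block is (iv)-safe or (iv)-covered by a strictly `⪰_L`-preferred block, then the
generated model does not validate `φ`. -/
theorem stmt19 {V L : Type} (M : PrefModel V) (φ : PForm V)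
    (rep : Set M.W → M.W) (hrep : ∀ S : Set M.W, S.Nonempty → rep S ∈ S)
    (hcm : ¬ valid M φ)
    (relL : L → L → Prop) (B : L → Block M.W)
    (ha : ∀ v ∈ Fal M rep φ, ∃ bv : L, v ∈ (B bv).U ∧ FlatBlock (B bv) ∧
        ∀ b' : L, strictRel relL b' bv → ∀ u ∈ (B b').U, strictRel M.rel u v)
    (hb : ∀ b : L, IVSafe M φ (B b) ∨
        ∃ b' : L, strictRel relL b' b ∧ IVCovers M φ (B b') (B b)) :
    ¬ valid (genModel M relL B) φ := by
  intro hval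
  have hne : ((truthSet M φ)ᶜ).Nonempty := by
    by_contra h
    rw [Set.not_nonempty_iff_eq_empty, Set.compl_empty_iff] at h
    exact hcm h
  have hFal : rep ((truthSet M φ)ᶜ) ∈ Fal M rep φ := Or.inl (Or.inl rfl)
  obtain ⟨b₀, hmem, -, -⟩ := ha _ hFal
  have h1 := (truth_lemma M φ rep hrep relL B ha hb φ (mem_Subf_self φ)
      ⟨(b₀, rep ((truthSet M φ)ᶜ)), hmem⟩).mp (by rw [hval]; exact Set.mem_univ _)
  exact (hrep _ hne) h1
end
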